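/- arXiv:1911.03202 — 6 statements merged into one kernel-verified Lean document; each statement's English description precedes it below -/
import Mathlib

section
/- Let K*/K be a field extension and L/K* a finite extension such that the tensor product K** ⊗_{K*} L is not an integral domain for some extension K** of K*. Then there exists a maximal ideal m of a polynomial ring K*[X_1,...,X_n] with K*[X_1,...,X_n]/m ≅ L such that the extension of m to K**[X_1,...,X_n] is not a maximal ideal. -/
/-!
Write `L = K'[X] ⧸ m` by choosing finitely many generators. Since
`K''[X] = K'' ⊗[K'] K'[X]`, right exactness of the tensor product gives
`K''[X] ⧸ m K''[X] ≃ K'' ⊗[K'] L`. If the extended ideal were maximal, this quotient would be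
a field, hence a domain.
-/

open TensorProduct

namespace MvPolynomial

variable {R S A σ : Type*} [CommRing R] [CommRing S] [CommRing A] [Algebra R S] [Algebra R A]

variable (S) in
noncomputable def baseChangeAlgHom (f : MvPolynomial σ R →ₐ[R] A) :
    MvPolynomial σ S →ₐ[S] S ⊗[R] A :=
  (Algebra.TensorProduct.map (AlgHom.id S S) f).comp (algebraTensorAlgEquiv R S).symm.toAlgHom

theorem baseChangeAlgHom_surjective {f : MvPolynomial σ R →ₐ[R] A}
    (hf : Function.Surjective f) : Function.Surjective (baseChangeAlgHom S f) :=
  (LinearMap.lTensor_surjective S (g := f.toLinearMap) hf).comp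
    (algebraTensorAlgEquiv R S).symm.surjective

theorem ker_baseChangeAlgHom {f : MvPolynomial σ R →ₐ[R] A} (hf : Function.Surjective f) :
    RingHom.ker (baseChangeAlgHom S f) = (RingHom.ker f).map (map (algebraMap R S)) := by
  set e := (algebraTensorAlgEquiv (σ := σ) R S).toRingEquiv
  have hmap : (e : S ⊗[R] MvPolynomial σ R →+* MvPolynomial σ S).comp
      Algebra.TensorProduct.includeRight.toRingHom = map (algebraMap R S) :=
    RingHom.ext fun p =>
      ((algebraTensorAlgEquiv R S).symm_apply_eq.mp (algebraTensorAlgEquiv_symm_map R S p)).symm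
  calc RingHom.ker (baseChangeAlgHom S f)
      = (RingHom.ker (Algebra.TensorProduct.map (AlgHom.id S S) f)).comap e.symm :=
        (RingHom.comap_ker _ _).symm
    _ = ((RingHom.ker f).map Algebra.TensorProduct.includeRight).map e := by
        rw [Ideal.comap_symm]
        exact congrArg (Ideal.map e) (Algebra.TensorProduct.lTensor_ker (A := S) f hf)
    _ = (RingHom.ker f).map (map (algebraMap R S)) := by
        rw [← hmap, ← Ideal.map_map]; rfl

noncomputable def quotientMapKerAlgEquivTensor {f : MvPolynomial σ R →ₐ[R] A}
    (hf : Function.Surjective f) :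
    (MvPolynomial σ S ⧸ (RingHom.ker f).map (map (algebraMap R S))) ≃ₐ[S] S ⊗[R] A :=
  (Ideal.quotientEquivAlgOfEq S (ker_baseChangeAlgHom hf)).symm.trans
    (Ideal.quotientKerAlgEquivOfSurjective (baseChangeAlgHom_surjective hf))

end MvPolynomial

/-- If `L/K'` is a finite extension and `K'' ⊗[K'] L` is not an integral domain for some
extension `K''/K'`, then there is a maximal ideal `m` of a polynomial ring over `K'` with
quotient isomorphic to `L` whose extension to `K''[X]` is not maximal. -/
theorem stmt_0 (K' K'' L : Type) [Field K'] [Field K''] [Field L]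
    [Algebra K' K''] [Algebra K' L] [FiniteDimensional K' L]
    (h : ¬ IsDomain (K'' ⊗[K'] L)) :
    ∃ (n : ℕ) (m : Ideal (MvPolynomial (Fin n) K')), m.IsMaximal ∧
      Nonempty ((MvPolynomial (Fin n) K' ⧸ m) ≃ₐ[K'] L) ∧
      ¬ (m.map (MvPolynomial.map (algebraMap K' K''))).IsMaximal := by
  obtain ⟨n, f, hf⟩ := Algebra.FiniteType.iff_quotient_mvPolynomial''.mp
    (inferInstance : Algebra.FiniteType K' L)
  refine ⟨n, RingHom.ker f, RingHom.ker_isMaximal_of_surjective f hf,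
    ⟨Ideal.quotientKerAlgEquivOfSurjective hf⟩, fun hmax => h ?_⟩
  have := hmax.isPrime
  exact MulEquiv.isDomain _ (MvPolynomial.quotientMapKerAlgEquivTensor hf).symm.toMulEquiv
end

section
/- Let F ⊆ E be a field extension such that E is linearly disjoint from the algebraic closure of F over F (i.e. E/F is regular). Let I be a prime ideal of F[X_1,...,X_n]. Then the extension of I to E[X_1,...,X_n] is a prime ideal. -/
/-!
Over an algebraically closed field `k`, the tensor product of two domains is a domain: reducing to
a finitely generated factor `A`, the Nullstellensatz gives enough `k`-points `χ : A → k` to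
separate nonzero elements, and `χ ⊗ id` maps `A ⊗ B` to the domain `B`. Hence for a regular
extension `E/F` and any domain `A` over `F`, the ring `E ⊗[F] A` embeds into
`Ω ⊗[F̄] (F̄ ⊗[F] E)` with `Ω` an algebraically closed field containing `A` and `F̄`, so it is a
domain. Taking `A = F[X]/I`, the quotient of `E[X] ≅ E ⊗[F] F[X]` by the extension of `I` is
`E ⊗[F] F[X]/I`, a domain.
-/

open TensorProduct

theorem IsAlgClosed.exists_algHom_apply_ne_zero {k A : Type*} [Field k] [IsAlgClosed k]
    [CommRing A] [IsReduced A] [Algebra k A] [Algebra.FiniteType k A] {a : A} (ha : a ≠ 0) :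
    ∃ χ : A →ₐ[k] k, χ a ≠ 0 := by
  have : IsJacobsonRing A := isJacobsonRing_of_finiteType (A := k)
  have ha' : a ∉ (⊥ : Ideal A).jacobson := by
    rwa [IsJacobsonRing.out ‹_› Ideal.isRadical_bot, Ideal.mem_bot]
  obtain ⟨m, ⟨-, hm⟩, ham⟩ : ∃ m : Ideal A, (⊥ ≤ m ∧ m.IsMaximal) ∧ a ∉ m := by
    simpa [Ideal.jacobson, Ideal.mem_sInf] using ha'
  let := Ideal.Quotient.field m
  have : Algebra.FiniteType k (A ⧸ m) := .of_surjective _ (Ideal.Quotient.mkₐ_surjective k m)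
  have : Module.Finite k (A ⧸ m) := finite_of_finite_type_of_isJacobsonRing k (A ⧸ m)
  refine ⟨IsAlgClosed.lift.comp (Ideal.Quotient.mkₐ k m), ?_⟩
  rw [AlgHom.comp_apply, map_ne_zero, Ideal.Quotient.mkₐ_eq_mk, Ne,
    Ideal.Quotient.eq_zero_iff_mem]
  exact ham

section

variable {k A B : Type*} [Field k] [CommRing A] [CommRing B] [Algebra k A] [Algebra k B]

theorem Module.Basis.repr_lid_map_eq_baseChange_repr {ι : Type*} (b : Basis ι k B)
    (χ : A →ₐ[k] k) (z : A ⊗[k] B) (i : ι) :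
    b.repr (Algebra.TensorProduct.lid k B (Algebra.TensorProduct.map χ (AlgHom.id k B) z)) i =
      χ ((b.baseChange A).repr z i) := by
  induction z using TensorProduct.induction_on with
  | zero => simp
  | tmul a c => simp [mul_comm]
  | add u v hu hv => simp only [map_add, Finsupp.add_apply, hu, hv]

theorem isDomain_tensorProduct_of_finiteType [IsAlgClosed k] [IsDomain A]
    [Algebra.FiniteType k A] [IsDomain B] : IsDomain (A ⊗[k] B) := by
  let b := Module.Basis.ofVectorSpace k B
  let μ (χ : A →ₐ[k] k) : A ⊗[k] B →ₐ[k] B :=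
    (Algebra.TensorProduct.lid k B).toAlgHom.comp (Algebra.TensorProduct.map χ (AlgHom.id k B))
  have coeff : ∀ {x : A ⊗[k] B}, x ≠ 0 → ∃ a ≠ 0, ∀ χ : A →ₐ[k] k, χ a ≠ 0 → μ χ x ≠ 0 := by
    intro x hx
    obtain ⟨i, hi⟩ := Finsupp.ne_iff.1 ((b.baseChange A).repr.map_ne_zero_iff.2 hx)
    refine ⟨_, hi, fun χ hχ hμ => hχ ?_⟩
    rw [← b.repr_lid_map_eq_baseChange_repr]
    change b.repr (μ χ x) i = 0
    rw [hμ, map_zero, Finsupp.zero_apply]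
  suffices NoZeroDivisors (A ⊗[k] B) from NoZeroDivisors.to_isDomain _
  refine ⟨fun {x y} hxy => ?_⟩
  by_contra! ⟨hx, hy⟩
  obtain ⟨a, ha, hμx⟩ := coeff hx
  obtain ⟨a', ha', hμy⟩ := coeff hy
  obtain ⟨χ, hχ⟩ := IsAlgClosed.exists_algHom_apply_ne_zero (k := k) (mul_ne_zero ha ha')
  rw [map_mul] at hχ
  exact mul_ne_zero (hμx χ (left_ne_zero_of_mul hχ)) (hμy χ (right_ne_zero_of_mul hχ))
    (by rw [← map_mul, hxy, map_zero])

theorem isDomain_tensorProduct_of_forall_fg {R : Type*} [CommRing R] [Algebra R A] [Algebra R B]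
    [Module.Flat R A] (h : ∀ C : Subalgebra R B, C.FG → IsDomain (A ⊗[R] C)) :
    IsDomain (A ⊗[R] B) := by
  have inj (C : Subalgebra R B) :
      Function.Injective (Algebra.TensorProduct.map (AlgHom.id A A) C.val) :=
    Module.Flat.lTensor_preserves_injective_linearMap _ Subtype.val_injective
  have := h ⊥ Subalgebra.fg_bot
  have : Nontrivial (A ⊗[R] B) := (inj ⊥).nontrivial
  suffices NoZeroDivisors (A ⊗[R] B) from NoZeroDivisors.to_isDomain _
  refine ⟨fun {x y} hxy => ?_⟩
  obtain ⟨C₁, hC₁, u, rfl⟩ := exists_fg_and_mem_baseChange x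
  obtain ⟨C₂, hC₂, v, rfl⟩ := exists_fg_and_mem_baseChange y
  have := h _ (hC₁.sup hC₂)
  have incl {C : Subalgebra R B} (hC : C ≤ C₁ ⊔ C₂) :
      Algebra.TensorProduct.map (AlgHom.id A A) C.val =
        (Algebra.TensorProduct.map (AlgHom.id A A) (C₁ ⊔ C₂).val).comp
          (Algebra.TensorProduct.map (AlgHom.id A A) (Subalgebra.inclusion hC)) := by
    ext; simp
  rw [incl le_sup_left, incl le_sup_right] at hxy ⊢
  simp only [AlgHom.toRingHom_eq_coe, RingHom.coe_coe, AlgHom.comp_apply, ← map_mul] at hxy ⊢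
  rw [← map_zero (Algebra.TensorProduct.map (AlgHom.id A A) (C₁ ⊔ C₂).val)] at hxy
  rcases mul_eq_zero.1 (inj _ hxy) with h | h <;> simp [h]

theorem isDomain_tensorProduct_of_isAlgClosed [IsAlgClosed k] [IsDomain A] [IsDomain B] :
    IsDomain (A ⊗[k] B) :=
  isDomain_tensorProduct_of_forall_fg fun C hC =>
    have : Algebra.FiniteType k C := (Subalgebra.fg_iff_finiteType C).1 hC
    have : IsDomain (C ⊗[k] A) := isDomain_tensorProduct_of_finiteType
    (Algebra.TensorProduct.comm k A C).toMulEquiv.isDomain _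

end

theorem isDomain_tensorProduct_of_isDomain_algebraicClosure {F E A : Type*} [Field F]
    [CommRing E] [Algebra F E] [CommRing A] [IsDomain A] [Algebra F A]
    (hreg : IsDomain (E ⊗[F] AlgebraicClosure F)) : IsDomain (E ⊗[F] A) := by
  let Ω := AlgebraicClosure (FractionRing A)
  let ι : A →ₐ[F] Ω := (IsScalarTower.toAlgHom F (FractionRing A) Ω).comp
    (IsScalarTower.toAlgHom F A (FractionRing A))
  have hι : Function.Injective ι :=
    (algebraMap (FractionRing A) Ω).injective.comp (IsFractionRing.injective A (FractionRing A))
  let j : AlgebraicClosure F →ₐ[F] Ω := IsAlgClosed.lift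
  let := j.toAlgebra
  have : IsScalarTower F (AlgebraicClosure F) Ω := .of_algebraMap_eq fun x => (j.commutes x).symm
  have : IsDomain (AlgebraicClosure F ⊗[F] E) :=
    (Algebra.TensorProduct.comm F _ E).toMulEquiv.isDomain _
  have : IsDomain (Ω ⊗[AlgebraicClosure F] (AlgebraicClosure F ⊗[F] E)) :=
    isDomain_tensorProduct_of_isAlgClosed
  have : IsDomain (E ⊗[F] Ω) :=
    ((Algebra.TensorProduct.comm F E Ω).toRingEquiv.trans
      (Algebra.TensorProduct.cancelBaseChange F (AlgebraicClosure F) (AlgebraicClosure F) Ω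
        E).symm.toRingEquiv).toMulEquiv.isDomain _
  exact Function.Injective.isDomain (Algebra.TensorProduct.map (AlgHom.id F E) ι).toRingHom
    (Module.Flat.lTensor_preserves_injective_linearMap ι.toLinearMap hι)

theorem Ideal.isPrime_map_includeRight_of_isDomain (F : Type*) {E R : Type*} [CommRing F]
    [CommRing E] [Algebra F E] [CommRing R] [Algebra F R] (I : Ideal R)
    [IsDomain (E ⊗[F] (R ⧸ I))] :
    (I.map (Algebra.TensorProduct.includeRight : R →ₐ[F] E ⊗[F] R)).IsPrime :=
  (Ideal.Quotient.isDomain_iff_prime _).1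
    ((Algebra.TensorProduct.tensorQuotientEquiv (R := F) F R E I).symm.toMulEquiv.isDomain _)

theorem MvPolynomial.map_algebraTensorAlgEquiv_map_includeRight {F E σ : Type*} [CommRing F]
    [CommRing E] [Algebra F E] (I : Ideal (MvPolynomial σ F)) :
    (I.map (Algebra.TensorProduct.includeRight : _ →ₐ[F] E ⊗[F] MvPolynomial σ F)).map
      (algebraTensorAlgEquiv F E) = I.map (map (algebraMap F E)) := by
  have h : (algebraTensorAlgEquiv F E).toRingEquiv.toRingHom.comp
      (Algebra.TensorProduct.includeRight : _ →ₐ[F] E ⊗[F] MvPolynomial σ F).toRingHom =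
      map (algebraMap F E) :=
    RingHom.ext fun p => by simp [algebraTensorAlgEquiv_tmul]
  rw [← h, ← Ideal.map_map]
  rfl

/-- If `E/F` is a regular field extension (i.e. `E ⊗[F] F̄` is a domain) and `I` is a prime
ideal of `F[X₁,…,Xₙ]`, then the extension of `I` to `E[X₁,…,Xₙ]` is prime. -/
theorem stmt_1 (F E : Type) [Field F] [Field E] [Algebra F E]
    (hreg : IsDomain (E ⊗[F] (AlgebraicClosure F)))
    (n : ℕ) (I : Ideal (MvPolynomial (Fin n) F)) (hI : I.IsPrime) :
    (I.map (MvPolynomial.map (algebraMap F E))).IsPrime := by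
  have : IsDomain (E ⊗[F] (MvPolynomial (Fin n) F ⧸ I)) :=
    isDomain_tensorProduct_of_isDomain_algebraicClosure hreg
  have := I.isPrime_map_includeRight_of_isDomain F (E := E)
  rw [← MvPolynomial.map_algebraTensorAlgEquiv_map_includeRight]
  exact Ideal.map_isPrime_of_equiv _
end

section
/- Let F ⊆ E be a regular field extension, I a prime ideal of F[X_1,...,X_n], and L the fraction field of F[X_1,...,X_n]/I. Then there is an injective ring homomorphism from E ⊗_F (F[X_1,...,X_n]/I) to E ⊗_F L, and E ⊗_F L is an integral domain. -/
/-!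
Tensoring over a field preserves injectivity, which gives the first claim and reduces the second
to `E ⊗[F] R` for finitely generated domains `R ⊆ L`. Suppose `x * y = 0` there with `x, y ≠ 0`,
and pick nonzero coefficients `r, s ∈ R` of `x, y` in an `F`-basis of `E`. As `R` is a Jacobson
domain, some maximal ideal avoids `r * s`; its residue field is finite over `F`, hence embeds into
`F̄`. The resulting `φ : R →ₐ[F] F̄` keeps these coefficients nonzero, so `x` and `y` map to nonzero
elements of the domain `E ⊗[F] F̄` with product zero.
-/

open TensorProduct

theorem exists_algHom_apply_ne_zero {F R K : Type*} [Field F] [CommRing R] [IsDomain R]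
    [Algebra F R] [Algebra.FiniteType F R] [Field K] [Algebra F K] [IsAlgClosed K]
    {r : R} (hr : r ≠ 0) : ∃ φ : R →ₐ[F] K, φ r ≠ 0 := by
  have : IsJacobsonRing R := isJacobsonRing_of_finiteType (A := F)
  have hr' : r ∉ (⊥ : Ideal R).jacobson := by
    rwa [← Ideal.radical_eq_jacobson, Ideal.radical_bot_of_isReduced, Ideal.mem_bot]
  obtain ⟨m, ⟨-, hm⟩, hrm⟩ : ∃ m : Ideal R, (⊥ ≤ m ∧ m.IsMaximal) ∧ r ∉ m := by
    simpa [Ideal.jacobson, Ideal.mem_sInf] using hr'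
  let := Ideal.Quotient.field m
  have : Module.Finite F (R ⧸ m) := finite_of_finite_type_of_isJacobsonRing F _
  refine ⟨(IsAlgClosed.lift : R ⧸ m →ₐ[F] K).comp (Ideal.Quotient.mkₐ F m), ?_⟩
  simpa [Ideal.Quotient.eq_zero_iff_mem] using hrm

theorem TensorProduct.equivFinsuppOfBasisLeft_lTensor {R M N P ι : Type*} [CommSemiring R]
    [AddCommMonoid M] [Module R M] [AddCommMonoid N] [Module R N] [AddCommMonoid P] [Module R P]
    [DecidableEq ι] (b : Module.Basis ι R M) (f : N →ₗ[R] P) (x : M ⊗[R] N) :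
    equivFinsuppOfBasisLeft b (f.lTensor M x) =
      (equivFinsuppOfBasisLeft b x).mapRange f f.map_zero := by
  induction x using TensorProduct.induction_on with
  | zero => simp
  | tmul m n => ext i; simp
  | add x y hx hy => rw [map_add, map_add, hx, hy, map_add, Finsupp.mapRange_add f.map_add]

theorem noZeroDivisors_tensorProduct_of_finiteType {F E R K : Type*} [Field F] [CommRing E]
    [Algebra F E] [CommRing R] [IsDomain R] [Algebra F R] [Algebra.FiniteType F R]
    [Field K] [Algebra F K] [IsAlgClosed K] [IsDomain (E ⊗[F] K)] :
    NoZeroDivisors (E ⊗[F] R) := by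
  classical
  let coord := equivFinsuppOfBasisLeft (Module.Free.chooseBasis F E) (N := R)
  have exists_coord_ne_zero : ∀ {z : E ⊗[F] R}, z ≠ 0 → ∃ i, coord z i ≠ 0 := fun hz => by
    by_contra! h
    exact hz (coord.map_eq_zero_iff.mp (Finsupp.ext h))
  refine ⟨fun {x y} hxy => ?_⟩
  by_contra! hne
  obtain ⟨i, hi⟩ := exists_coord_ne_zero hne.1
  obtain ⟨j, hj⟩ := exists_coord_ne_zero hne.2
  obtain ⟨φ, hφ⟩ := exists_algHom_apply_ne_zero (F := F) (K := K) (mul_ne_zero hi hj)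
  rw [map_mul] at hφ
  let Φ := Algebra.TensorProduct.map (AlgHom.id F E) φ
  have Φ_ne_zero : ∀ {z k}, φ (coord z k) ≠ 0 → Φ z ≠ 0 := fun {z k} h hz => h <| by
    have hΦ : Φ z = φ.toLinearMap.lTensor E z := rfl
    simpa [← hΦ, hz, coord, eq_comm] using DFunLike.congr_fun
      (equivFinsuppOfBasisLeft_lTensor (Module.Free.chooseBasis F E) φ.toLinearMap z) k
  exact mul_ne_zero (Φ_ne_zero (left_ne_zero_of_mul hφ)) (Φ_ne_zero (right_ne_zero_of_mul hφ))
    (by rw [← map_mul, hxy, map_zero])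

theorem Subalgebra.baseChange_mono {R A C : Type*} [CommSemiring R] [Semiring A] [Algebra R A]
    [CommSemiring C] [Algebra R C] {B D : Subalgebra R A} (h : B ≤ D) :
    B.baseChange C ≤ D.baseChange C := by
  rintro _ ⟨z, rfl⟩
  refine ⟨Algebra.TensorProduct.map (AlgHom.id C C) (Subalgebra.inclusion h) z, ?_⟩
  change (Algebra.TensorProduct.map _ D.val) (Algebra.TensorProduct.map _ _ z) =
    Algebra.TensorProduct.map _ B.val z
  rw [← AlgHom.comp_apply, ← Algebra.TensorProduct.map_comp]
  rfl

theorem NoZeroDivisors.tensorProduct_of_flat_of_forall_fg {R C A : Type*} [CommSemiring R]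
    [CommSemiring C] [Semiring A] [Algebra R A] [Algebra R C] [Module.Flat R C]
    (h : ∀ B : Subalgebra R A, B.FG → NoZeroDivisors (C ⊗[R] B)) :
    NoZeroDivisors (C ⊗[R] A) := by
  refine ⟨fun {x y} hxy => ?_⟩
  obtain ⟨Bx, hBx, hx⟩ := exists_fg_and_mem_baseChange (A := C) x
  obtain ⟨By, hBy, hy⟩ := exists_fg_and_mem_baseChange (A := C) y
  have := h _ (hBx.sup hBy)
  let ι := Algebra.TensorProduct.map (AlgHom.id C C) (Bx ⊔ By).val
  have hι : Function.Injective ι :=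
    Module.Flat.lTensor_preserves_injective_linearMap _ Subtype.val_injective
  obtain ⟨x', rfl⟩ : ∃ x', ι x' = x :=
    Subalgebra.baseChange_mono (le_sup_left : Bx ≤ Bx ⊔ By) hx
  obtain ⟨y', rfl⟩ : ∃ y', ι y' = y :=
    Subalgebra.baseChange_mono (le_sup_right : By ≤ Bx ⊔ By) hy
  rw [← map_mul, ← map_zero ι, hι.eq_iff] at hxy
  rcases mul_eq_zero.mp hxy with rfl | rfl <;> simp

theorem isDomain_tensorProduct_of_isAlgClosed_s2 {F E A K : Type*} [Field F] [CommRing E]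
    [Algebra F E] [CommRing A] [IsDomain A] [Algebra F A] [Field K] [Algebra F K] [IsAlgClosed K]
    [IsDomain (E ⊗[F] K)] : IsDomain (E ⊗[F] A) := by
  have : Nontrivial E :=
    (Algebra.TensorProduct.includeLeftRingHom : E →+* E ⊗[F] K).domain_nontrivial
  have : NoZeroDivisors (E ⊗[F] A) :=
    NoZeroDivisors.tensorProduct_of_flat_of_forall_fg fun B hB =>
      have := (Subalgebra.fg_iff_finiteType B).mp hB
      noZeroDivisors_tensorProduct_of_finiteType (K := K)
  exact NoZeroDivisors.to_isDomain _

theorem stmt_2_general (F E : Type) [Field F] [Field E] [Algebra F E]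
    (hreg : IsDomain (E ⊗[F] (AlgebraicClosure F)))
    (n : ℕ) (I : Ideal (MvPolynomial (Fin n) F))
    (L : Type) [Field L] [Algebra (MvPolynomial (Fin n) F ⧸ I) L]
    [IsFractionRing (MvPolynomial (Fin n) F ⧸ I) L]
    [Algebra F L] [IsScalarTower F (MvPolynomial (Fin n) F ⧸ I) L] :
    Function.Injective
      (Algebra.TensorProduct.map (AlgHom.id F E)
        (IsScalarTower.toAlgHom F (MvPolynomial (Fin n) F ⧸ I) L)) ∧
      IsDomain (E ⊗[F] L) :=
  ⟨Module.Flat.lTensor_preserves_injective_linearMap _ (IsFractionRing.injective _ L),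
    isDomain_tensorProduct_of_isAlgClosed_s2 (K := AlgebraicClosure F)⟩

/-- If `E/F` is regular, `I` a prime ideal of `F[X₁,…,Xₙ]` and `L` the fraction field of
`F[X₁,…,Xₙ]/I`, then the canonical map `E ⊗[F] (F[X]/I) → E ⊗[F] L` is injective and
`E ⊗[F] L` is an integral domain. -/
theorem stmt_2 (F E : Type) [Field F] [Field E] [Algebra F E]
    (hreg : IsDomain (E ⊗[F] (AlgebraicClosure F)))
    (n : ℕ) (I : Ideal (MvPolynomial (Fin n) F)) (hI : I.IsPrime)
    (L : Type) [Field L] [Algebra (MvPolynomial (Fin n) F ⧸ I) L]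
    [IsFractionRing (MvPolynomial (Fin n) F ⧸ I) L]
    [Algebra F L] [IsScalarTower F (MvPolynomial (Fin n) F ⧸ I) L] :
    Function.Injective
      (Algebra.TensorProduct.map (AlgHom.id F E)
        (IsScalarTower.toAlgHom F (MvPolynomial (Fin n) F ⧸ I) L)) ∧
      IsDomain (E ⊗[F] L) :=
  stmt_2_general F E hreg n I L
end

section
/- Let K ⊆ K* ⊆ K** be fields such that the algebraic closure of K* equals K* ⊗_K \bar{K} (i.e. K*·\bar{K} is algebraically closed and K* is linearly disjoint from \bar{K} over K) and K**/K is a regular extension. Then K**/K* is a regular extension. -/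
open TensorProduct

/-- Let `K ⊆ K* ⊆ K**` be fields such that the algebraic closure of `K*` is isomorphic as a
`K*`-algebra to `K* ⊗[K] K̄`, and such that `K**/K` is regular (i.e. `K** ⊗[K] K̄` is a
domain).  Then `K**/K*` is regular, i.e. `K** ⊗[K*] (K*)̄ ` is a domain. -/
theorem stmt_4 (K K' K'' : Type) [Field K] [Field K'] [Field K'']
    [Algebra K K'] [Algebra K K''] [Algebra K' K''] [IsScalarTower K K' K'']
    (hclos : Nonempty ((AlgebraicClosure K') ≃ₐ[K'] (K' ⊗[K] (AlgebraicClosure K))))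
    (hreg : IsDomain (K'' ⊗[K] (AlgebraicClosure K))) :
    IsDomain (K'' ⊗[K'] (AlgebraicClosure K')) := by
  obtain ⟨e⟩ := hclos
  let cancel : K'' ⊗[K'] AlgebraicClosure K' ≃ₐ[K'] K'' ⊗[K] AlgebraicClosure K :=
    (Algebra.TensorProduct.congr AlgEquiv.refl e).trans
      (Algebra.TensorProduct.cancelBaseChange K K' K' K'' (AlgebraicClosure K))
  exact cancel.toMulEquiv.isDomain
end

section
/- Let K be a field, m, n natural numbers, and I an ideal of K[X_1,...,X_m]. Then dim_K K[X_1,...,X_m]/I ≤ n if and only if every n+1 monomials of total degree at most n are linearly dependent modulo I. -/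
/-!
Let `W k` be the span in `K[X]/I` of the monomials of total degree at most `k`: an increasing
chain with `1 ∈ W 0`. If any `n + 1` of these monomials are dependent then `dim W n ≤ n`, so the
chain `W 0 ≤ ⋯ ≤ W n` cannot grow at every step and `W (k + 1) = W k` for some `k < n`. Then
`W k` is stable under multiplication by every variable, hence by every polynomial, and as it
contains `1` it is the whole quotient. The converse is immediate.
-/

open Module Submodule Cardinal

section LinearAlgebra

variable {K V : Type*} [DivisionRing K] [AddCommGroup V] [Module K V]

theorem rank_span_image_le_of_forall_not_linearIndependent {ι : Type*} (f : ι → V) (s : Set ι)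
    {n : ℕ} (h : ∀ d : Fin (n + 1) → ι, (∀ i, d i ∈ s) → ¬ LinearIndependent K fun i => f (d i)) :
    Module.rank K (span K (f '' s)) ≤ n := by
  obtain ⟨t, hts, hspan, hli⟩ := exists_linearIndependent K (f '' s)
  rw [← hspan, rank_span_set hli]
  by_contra! hlt
  obtain ⟨e⟩ : Nonempty (Fin (n + 1) ↪ t) :=
    Cardinal.lift_mk_le'.1 (by simpa using natCast_add_one_le_iff.2 hlt)
  choose d hds hdf using fun i => hts (e i).2
  refine h d hds ?_
  simpa only [Function.comp_def, hdf] using hli.comp e e.injective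

theorem Submodule.exists_succ_le_of_finrank_le {W : ℕ → Submodule K V} (hW : Monotone W) {n : ℕ}
    [FiniteDimensional K (W n)] (h0 : W 0 ≠ ⊥) (hn : finrank K (W n) ≤ n) :
    ∃ k < n, W (k + 1) ≤ W k := by
  by_contra! hstrict
  have hgrow : ∀ k ≤ n, k < finrank K (W k) := by
    intro k hk
    induction k with
    | zero =>
      have : FiniteDimensional K (W 0) := finiteDimensional_of_le (hW hk)
      exact one_le_finrank_iff.2 h0
    | succ k ih =>
      have : FiniteDimensional K (W (k + 1)) := finiteDimensional_of_le (hW hk)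
      have hlt : W k < W (k + 1) := lt_of_le_not_ge (hW k.le_succ) (hstrict k hk)
      exact Nat.lt_of_le_of_lt (ih (by omega)) (finrank_lt_finrank_of_lt hlt)
  exact (hgrow n le_rfl).not_ge hn

end LinearAlgebra

namespace MvPolynomial

variable {σ R : Type*} [CommRing R] (I : Ideal (MvPolynomial σ R))

noncomputable def quotTotalDegreeLE (k : ℕ) : Submodule R (MvPolynomial σ R ⧸ I) :=
  (restrictTotalDegree σ R k).map (Ideal.Quotient.mkₐ R I).toLinearMap

variable {I}

theorem mem_quotTotalDegreeLE {k : ℕ} {x : MvPolynomial σ R ⧸ I} :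
    x ∈ quotTotalDegreeLE I k ↔
      ∃ p : MvPolynomial σ R, p.totalDegree ≤ k ∧ Ideal.Quotient.mk I p = x := by
  simp [quotTotalDegreeLE, mem_restrictTotalDegree]

theorem mk_mem_quotTotalDegreeLE {k : ℕ} {p : MvPolynomial σ R} (hp : p.totalDegree ≤ k) :
    Ideal.Quotient.mk I p ∈ quotTotalDegreeLE I k :=
  mem_quotTotalDegreeLE.2 ⟨p, hp, rfl⟩

variable (I)

theorem quotTotalDegreeLE_mono : Monotone (quotTotalDegreeLE I) := fun _ _ hkl =>
  map_mono (restrictSupport_mono R fun _ hs => le_trans hs hkl)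

theorem quotTotalDegreeLE_eq_span (k : ℕ) :
    quotTotalDegreeLE I k = span R
      ((fun s => Ideal.Quotient.mk I (monomial s (1 : R))) '' {s | (s.sum fun _ e => e) ≤ k}) := by
  rw [quotTotalDegreeLE, restrictTotalDegree, restrictSupport_eq_span, map_span, Set.image_image]
  rfl

theorem totalDegree_X_mul_le (i : σ) (q : MvPolynomial σ R) :
    (X i * q).totalDegree ≤ q.totalDegree + 1 := by
  calc (X i * q).totalDegree ≤ (X i : MvPolynomial σ R).totalDegree + q.totalDegree :=
        totalDegree_mul _ _
    _ ≤ 1 + q.totalDegree := by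
        gcongr
        simpa [X] using totalDegree_monomial_le (R := R) (Finsupp.single i 1) 1
    _ = q.totalDegree + 1 := add_comm _ _

theorem quotTotalDegreeLE_eq_top_of_succ_le {k : ℕ}
    (h : quotTotalDegreeLE I (k + 1) ≤ quotTotalDegreeLE I k) : quotTotalDegreeLE I k = ⊤ := by
  suffices hmul : ∀ p q : MvPolynomial σ R, q.totalDegree ≤ k →
      Ideal.Quotient.mk I (p * q) ∈ quotTotalDegreeLE I k by
    refine eq_top_iff'.2 fun x => ?_
    obtain ⟨p, rfl⟩ := Ideal.Quotient.mk_surjective x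
    simpa using hmul p 1 (by simp)
  intro p
  induction p using MvPolynomial.induction_on with
  | C a =>
    intro q hq
    rw [← smul_eq_C_mul]
    exact mk_mem_quotTotalDegreeLE ((totalDegree_smul_le a q).trans hq)
  | add p p' hp hp' =>
    intro q hq
    rw [add_mul, map_add]
    exact add_mem (hp q hq) (hp' q hq)
  | mul_X p i hp =>
    intro q hq
    obtain ⟨q', hq', hq'_eq⟩ := mem_quotTotalDegreeLE.1
      (h (mk_mem_quotTotalDegreeLE ((totalDegree_X_mul_le i q).trans (by omega))))
    rw [mul_assoc, map_mul, ← hq'_eq, ← map_mul]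
    exact hp q' hq'

end MvPolynomial

open MvPolynomial in
/-- Let `K` be a field, `I` an ideal of `K[X₁,…,Xₘ]` and `n` a natural number.  Then
`dim_K K[X₁,…,Xₘ]/I ≤ n` if and only if any `n+1` monomials of total degree at most `n` are
linearly dependent modulo `I`. -/
theorem stmt_9 (K : Type) [Field K] (m n : ℕ) (I : Ideal (MvPolynomial (Fin m) K)) :
    Module.rank K (MvPolynomial (Fin m) K ⧸ I) ≤ n ↔
      ∀ d : Fin (n + 1) → (Fin m →₀ ℕ), (∀ i, (d i).sum (fun _ e => e) ≤ n) →
        ¬ LinearIndependent K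
          (fun i => Ideal.Quotient.mk I (MvPolynomial.monomial (d i) (1 : K))) := by
  constructor
  · intro hrank d _ hli
    have hcard := hli.cardinal_le_rank.trans hrank
    rw [mk_fin, Nat.cast_le] at hcard
    omega
  intro H
  rcases subsingleton_or_nontrivial (MvPolynomial (Fin m) K ⧸ I) with _ | _
  · simp
  have hWn : Module.rank K (quotTotalDegreeLE I n) ≤ n := by
    rw [quotTotalDegreeLE_eq_span]
    exact rank_span_image_le_of_forall_not_linearIndependent _ _ H
  have : FiniteDimensional K (quotTotalDegreeLE I n) :=
    Module.rank_lt_aleph0_iff.1 (hWn.trans_lt (natCast_lt_aleph0 (n := n)))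
  have h0 : quotTotalDegreeLE I 0 ≠ ⊥ := by
    refine (Submodule.ne_bot_iff _).2 ⟨1, ?_, one_ne_zero⟩
    simpa using mk_mem_quotTotalDegreeLE (I := I) (totalDegree_one (σ := Fin m) (R := K)).le
  obtain ⟨k, hkn, hk⟩ := Submodule.exists_succ_le_of_finrank_le (quotTotalDegreeLE_mono I) h0
    (finrank_le_of_rank_le hWn)
  have htop : quotTotalDegreeLE I n = ⊤ := top_unique <|
    (quotTotalDegreeLE_eq_top_of_succ_le I hk).ge.trans (quotTotalDegreeLE_mono I hkn.le)
  rwa [htop, rank_top] at hWn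
end

section
/- Let K be a field and I = (f_1,...,f_r) an ideal of K[X_1,...,X_m]. Then I is maximal if and only if I is prime and dim_K K[X_1,...,X_m]/I is finite. -/
/- Zariski's lemma makes the residue field of a maximal ideal of a finitely generated
`K`-algebra finite over `K`; conversely a domain that is integral over a field is a field. -/

theorem Ideal.isMaximal_iff_isPrime_and_finiteDimensional_quotient (K A : Type*) [Field K]
    [CommRing A] [Algebra K A] [Algebra.FiniteType K A] (I : Ideal A) :
    I.IsMaximal ↔ I.IsPrime ∧ FiniteDimensional K (A ⧸ I) := by
  refine ⟨fun hI => ⟨hI.isPrime, ?_⟩, fun ⟨_, _⟩ => ?_⟩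
  · let _ : Field (A ⧸ I) := Ideal.Quotient.field I
    exact finite_of_finite_type_of_isJacobsonRing K _
  · have : Algebra.IsIntegral K (A ⧸ I) := Algebra.IsIntegral.of_finite K _
    exact Ideal.Quotient.maximal_of_isField I
      (isField_of_isIntegral_of_isField' (Semifield.toIsField K))

theorem stmt_10_general (K : Type) [Field K] (m : ℕ)
    (I : Ideal (MvPolynomial (Fin m) K)) :
    I.IsMaximal ↔ I.IsPrime ∧ FiniteDimensional K (MvPolynomial (Fin m) K ⧸ I) :=
  I.isMaximal_iff_isPrime_and_finiteDimensional_quotient K _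

/-- Let `K` be a field and `I = (f₁,…,f_r)` an ideal of `K[X₁,…,Xₘ]`.  Then `I` is maximal if
and only if `I` is prime and `K[X₁,…,Xₘ]/I` is finite-dimensional over `K`. -/
theorem stmt_10 (K : Type) [Field K] (m r : ℕ) (f : Fin r → MvPolynomial (Fin m) K)
    (I : Ideal (MvPolynomial (Fin m) K)) (hI : I = Ideal.span (Set.range f)) :
    I.IsMaximal ↔ I.IsPrime ∧ FiniteDimensional K (MvPolynomial (Fin m) K ⧸ I) :=
  stmt_10_general K m I
end
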